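/- Let G be a left-linear context-free grammar and let F be the FSA derived from G by the basic approximation algorithm, i.e., the flattening F_≡ of the recognizer R(G) unfolded by the collapsing stack congruence. Then L(G) = L(F). -/

import Mathlib

/-!
Infrastructure for finite-state approximation of context-free grammars
(Pereira & Wright). We use Mathlib's `ContextFreeGrammar`.

A dotted rule `A → α · β` is represented as `(some A, α, β)`;
the auxiliary dotted rules `S' → · S` and `S' → S ·` are represented with
first component `none`.  States of the LR(0) characteristic machine `M(G)`
are sets of dotted rules (the determinization by the subset construction);
the transition function `next` is total, with the empty set `∅` playing the
role of "undefined", so genuine transitions are those with nonempty target.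
-/

namespace LRApprox

universe uN uT

variable {T : Type uT}

/-- The context-free grammar of the older Mathlib, whose type of nonterminals
may live in any universe `uN` (current Mathlib restricts it to `Type`). -/
structure ContextFreeGrammar.{uN', uT'} (T : Type uT') where
  /-- Type of nonterminals. -/
  NT : Type uN'
  /-- Initial nonterminal. -/
  initial : NT
  /-- Rewrite rules. -/
  rules : Finset (ContextFreeRule T NT)

/-- One rewriting step of a grammar. -/
def ContextFreeGrammar.Produces (g : ContextFreeGrammar.{uN} T) (u v : List (Symbol T g.NT)) :
    Prop :=
  ∃ r ∈ g.rules, r.Rewrites u v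

/-- Derivation in finitely many steps. -/
abbrev ContextFreeGrammar.Derives (g : ContextFreeGrammar.{uN} T) :
    List (Symbol T g.NT) → List (Symbol T g.NT) → Prop :=
  Relation.ReflTransGen g.Produces

/-- `g` generates the string `s` from its initial nonterminal. -/
def ContextFreeGrammar.Generates (g : ContextFreeGrammar.{uN} T) (s : List (Symbol T g.NT)) :
    Prop :=
  g.Derives [Symbol.nonterminal g.initial] s

/-- The language generated by `g`. -/
def ContextFreeGrammar.language (g : ContextFreeGrammar.{uN} T) : Language T :=
  { w : List T | g.Generates (w.map Symbol.terminal) }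

/-- A dotted rule `A → α · β`; `none` as first component stands for the
auxiliary start symbol `S'`. -/
abbrev DottedRule (g : ContextFreeGrammar.{uN} T) : Type _ :=
  Option g.NT × List (Symbol T g.NT) × List (Symbol T g.NT)

/-- A state of the characteristic machine `M(G)`: a set of dotted rules. -/
abbrev LRState (g : ContextFreeGrammar.{uN} T) : Type _ := Set (DottedRule g)

/-- Closure of a set of dotted rules: whenever `A → α · B β` is present and
`B → γ` is a rule, add `B → · γ`. -/
inductive Closure (g : ContextFreeGrammar.{uN} T) (R : Set (DottedRule g)) :
    DottedRule g → Prop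
  | base {d : DottedRule g} : d ∈ R → Closure g R d
  | step {A : Option g.NT} {α β : List (Symbol T g.NT)} {B : g.NT}
      (r : ContextFreeRule T g.NT) :
      Closure g R (A, α, Symbol.nonterminal B :: β) →
      r ∈ g.rules → r.input = B → Closure g R (some B, [], r.output)

/-- The transition function `δ` of `M(G)`: shift the dot over `X` and take the
closure.  The empty set plays the role of "undefined". -/
def next (g : ContextFreeGrammar.{uN} T) (s : LRState g) (X : Symbol T g.NT) : LRState g :=
  {d | Closure g {d' | ∃ A α β, (A, α, X :: β) ∈ s ∧ d' = (A, α ++ [X], β)} d}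

/-- The start state `s₀` of `M(G)`: the closure of `{S' → · S}`. -/
def start (g : ContextFreeGrammar.{uN} T) : LRState g :=
  {d | Closure g {(none, [], [Symbol.nonterminal g.initial])} d}

/-- The dotted rule `S' → S ·`. -/
def finalDR (g : ContextFreeGrammar.{uN} T) : DottedRule g :=
  (none, [Symbol.nonterminal g.initial], [])

/-- A state is final iff it contains `S' → S ·`. -/
def IsFinal (g : ContextFreeGrammar.{uN} T) (s : LRState g) : Prop := finalDR g ∈ s

/-- Iterated transition function, extended to strings of symbols. -/
def nextStar (g : ContextFreeGrammar.{uN} T) (s : LRState g)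
    (α : List (Symbol T g.NT)) : LRState g :=
  α.foldl (next g) s

/-- A stack of the shift-reduce recognizer: a sequence of (state, symbol) pairs. -/
abbrev Stack (g : ContextFreeGrammar.{uN} T) : Type _ :=
  List (LRState g × Symbol T g.NT)

/-- `Stacks g s σ` iff `σ = ⟨q₀,X₀⟩…⟨q_k,X_k⟩` with `q₀ = s₀`,
`q_i = δ(q_{i-1},X_{i-1})` and `s = δ(q_k,X_k)`; in addition `Stacks s₀`
contains the empty sequence. -/
inductive Stacks (g : ContextFreeGrammar.{uN} T) : LRState g → Stack g → Prop
  | nil : Stacks g (start g) []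
  | snoc {q : LRState g} {σ : Stack g} {X : Symbol T g.NT} :
      Stacks g q σ → next g q X ≠ ∅ → Stacks g (next g q X) (σ ++ [(q, X)])

/-- A configuration `⟨s, σ, w⟩` of the shift-reduce recognizer `R(G)`. -/
structure Cfg (g : ContextFreeGrammar.{uN} T) where
  state : LRState g
  stack : Stack g
  input : List T

/-- A shift move of `R(G)`. -/
inductive ShiftStep (g : ContextFreeGrammar.{uN} T) : Cfg g → Cfg g → Prop
  | shift {s : LRState g} {σ : Stack g} {x : T} {w : List T} :
      next g s (Symbol.terminal x) ≠ ∅ →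
      ShiftStep g ⟨s, σ, x :: w⟩
        ⟨next g s (Symbol.terminal x), σ ++ [(s, Symbol.terminal x)], w⟩

/-- A reduce move of `R(G)`. -/
inductive ReduceStep (g : ContextFreeGrammar.{uN} T) : Cfg g → Cfg g → Prop
  | empty {s : LRState g} {σ : Stack g} {w : List T} {A : g.NT} :
      (some A, ([] : List (Symbol T g.NT)), ([] : List (Symbol T g.NT))) ∈ s →
      next g s (Symbol.nonterminal A) ≠ ∅ →
      ReduceStep g ⟨s, σ, w⟩
        ⟨next g s (Symbol.nonterminal A), σ ++ [(s, Symbol.nonterminal A)], w⟩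
  | pop {s : LRState g} {σ τ : Stack g} {w : List T} {A : g.NT}
      {s₁ : LRState g} {X₁ : Symbol T g.NT} :
      (some A, ((s₁, X₁) :: τ).map Prod.snd, ([] : List (Symbol T g.NT))) ∈ s →
      next g s₁ (Symbol.nonterminal A) ≠ ∅ →
      ReduceStep g ⟨s, σ ++ (s₁, X₁) :: τ, w⟩
        ⟨next g s₁ (Symbol.nonterminal A), σ ++ [(s₁, Symbol.nonterminal A)], w⟩

/-- A move of the shift-reduce recognizer `R(G)`. -/
def Step (g : ContextFreeGrammar.{uN} T) (c c' : Cfg g) : Prop :=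
  ShiftStep g c c' ∨ ReduceStep g c c'

/-- `R(G)` accepts `w`: some sequence of moves leads from the initial
configuration `⟨s₀, ε, w⟩` to a final configuration `⟨s, ⟨s₀,S⟩, ε⟩`, `s ∈ F`. -/
def RAccepts (g : ContextFreeGrammar.{uN} T) (w : List T) : Prop :=
  ∃ s : LRState g, IsFinal g s ∧
    Relation.ReflTransGen (Step g) ⟨start g, [], w⟩
      ⟨s, [(start g, Symbol.nonterminal g.initial)], []⟩

/-- A stack congruence on `R(G)`: a family of equivalence relations on
`Stacks(s)`, compatible with pushing. -/
def IsStackCongruence (g : ContextFreeGrammar.{uN} T)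
    (E : LRState g → Stack g → Stack g → Prop) : Prop :=
  (∀ s σ σ', E s σ σ' → Stacks g s σ ∧ Stacks g s σ') ∧
  (∀ s σ, Stacks g s σ → E s σ σ) ∧
  (∀ s σ σ', E s σ σ' → E s σ' σ) ∧
  (∀ s σ₁ σ₂ σ₃, E s σ₁ σ₂ → E s σ₂ σ₃ → E s σ₁ σ₃) ∧
  (∀ s X σ σ', next g s X ≠ ∅ → E s σ σ' →
    E (next g s X) (σ ++ [(s, X)]) (σ' ++ [(s, X)]))

/-- A state of the unfolded recognizer `R_≡`: a state of `M(G)` together with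
an equivalence class of stacks (represented as a set of stacks). -/
abbrev UState (g : ContextFreeGrammar.{uN} T) : Type _ := LRState g × Set (Stack g)

/-- Transition function `δ_≡` of the unfolded recognizer:
`δ_≡(⟨s,[σ]⟩, X) = ⟨δ(s,X), [σ⟨s,X⟩]⟩`. -/
def uNext (g : ContextFreeGrammar.{uN} T) (E : LRState g → Stack g → Stack g → Prop)
    (p : UState g) (X : Symbol T g.NT) : UState g :=
  (next g p.1 X,
   {τ | Stacks g (next g p.1 X) τ ∧ ∃ σ ∈ p.2, E (next g p.1 X) τ (σ ++ [(p.1, X)])})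

/-- Start state `⟨s₀, [ε]⟩` of the unfolded recognizer. -/
def uStart (g : ContextFreeGrammar.{uN} T)
    (E : LRState g → Stack g → Stack g → Prop) : UState g :=
  (start g, {τ | Stacks g (start g) τ ∧ E (start g) τ []})

/-- Genuine states of the unfolded recognizer: pairs `⟨s, [σ]_s⟩` with
`σ ∈ Stacks(s)`. -/
def IsUState (g : ContextFreeGrammar.{uN} T)
    (E : LRState g → Stack g → Stack g → Prop) (p : UState g) : Prop :=
  ∃ σ, Stacks g p.1 σ ∧ p.2 = {τ | Stacks g p.1 τ ∧ E p.1 τ σ}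

/-- Iterated `δ_≡`, extended to strings of symbols. -/
def uNextStar (g : ContextFreeGrammar.{uN} T)
    (E : LRState g → Stack g → Stack g → Prop)
    (p : UState g) (α : List (Symbol T g.NT)) : UState g :=
  α.foldl (uNext g E) p

/-- A configuration of the unfolded recognizer `R_≡`. -/
structure UCfg (g : ContextFreeGrammar.{uN} T) where
  state : UState g
  stack : List (UState g × Symbol T g.NT)
  input : List T

/-- A shift move of the unfolded recognizer. -/
inductive UShiftStep (g : ContextFreeGrammar.{uN} T)
    (E : LRState g → Stack g → Stack g → Prop) : UCfg g → UCfg g → Prop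
  | shift {p : UState g} {σ : List (UState g × Symbol T g.NT)} {x : T} {w : List T} :
      next g p.1 (Symbol.terminal x) ≠ ∅ →
      UShiftStep g E ⟨p, σ, x :: w⟩
        ⟨uNext g E p (Symbol.terminal x), σ ++ [(p, Symbol.terminal x)], w⟩

/-- A reduce move of the unfolded recognizer. -/
inductive UReduceStep (g : ContextFreeGrammar.{uN} T)
    (E : LRState g → Stack g → Stack g → Prop) : UCfg g → UCfg g → Prop
  | empty {p : UState g} {σ : List (UState g × Symbol T g.NT)} {w : List T} {A : g.NT} :
      (some A, ([] : List (Symbol T g.NT)), ([] : List (Symbol T g.NT))) ∈ p.1 →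
      next g p.1 (Symbol.nonterminal A) ≠ ∅ →
      UReduceStep g E ⟨p, σ, w⟩
        ⟨uNext g E p (Symbol.nonterminal A), σ ++ [(p, Symbol.nonterminal A)], w⟩
  | pop {p : UState g} {σ τ : List (UState g × Symbol T g.NT)} {w : List T} {A : g.NT}
      {p₁ : UState g} {X₁ : Symbol T g.NT} :
      (some A, ((p₁, X₁) :: τ).map Prod.snd, ([] : List (Symbol T g.NT))) ∈ p.1 →
      next g p₁.1 (Symbol.nonterminal A) ≠ ∅ →
      UReduceStep g E ⟨p, σ ++ (p₁, X₁) :: τ, w⟩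
        ⟨uNext g E p₁ (Symbol.nonterminal A), σ ++ [(p₁, Symbol.nonterminal A)], w⟩

/-- A move of the unfolded recognizer `R_≡`. -/
def UStep (g : ContextFreeGrammar.{uN} T)
    (E : LRState g → Stack g → Stack g → Prop) (c c' : UCfg g) : Prop :=
  UShiftStep g E c c' ∨ UReduceStep g E c c'

/-- The unfolded recognizer `R_≡` accepts `w`. -/
def UAccepts (g : ContextFreeGrammar.{uN} T)
    (E : LRState g → Stack g → Stack g → Prop) (w : List T) : Prop :=
  ∃ p : UState g, IsFinal g p.1 ∧
    Relation.ReflTransGen (UStep g E) ⟨uStart g E, [], w⟩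
      ⟨p, [(uStart g E, Symbol.nonterminal g.initial)], []⟩

/-- `Pop(p)`: the unfolded states reachable from `p` by a reduction. -/
def PopSet (g : ContextFreeGrammar.{uN} T)
    (E : LRState g → Stack g → Stack g → Prop) (p : UState g) : Set (UState g) :=
  {p' | ∃ (A : g.NT) (α : List (Symbol T g.NT)) (p'' : UState g),
    IsUState g E p'' ∧
    (some A, α, ([] : List (Symbol T g.NT))) ∈ p.1 ∧
    (some A, ([] : List (Symbol T g.NT)), α) ∈ p''.1 ∧
    uNextStar g E p'' α = p ∧
    next g p''.1 (Symbol.nonterminal A) ≠ ∅ ∧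
    uNext g E p'' (Symbol.nonterminal A) = p'}

/-- Paths in the flattening `F_≡` of the unfolded recognizer: terminal
transitions follow `δ_≡` and reductions become ε-transitions. -/
inductive FPath (g : ContextFreeGrammar.{uN} T)
    (E : LRState g → Stack g → Stack g → Prop) : UState g → List T → UState g → Prop
  | refl (p : UState g) : FPath g E p [] p
  | shift {p : UState g} {x : T} {w : List T} {q : UState g} :
      next g p.1 (Symbol.terminal x) ≠ ∅ →
      FPath g E (uNext g E p (Symbol.terminal x)) w q → FPath g E p (x :: w) q
  | eps {p p' : UState g} {w : List T} {q : UState g} :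
      p' ∈ PopSet g E p → FPath g E p' w q → FPath g E p w q

/-- The flattening `F_≡` accepts `w`. -/
def FAccepts (g : ContextFreeGrammar.{uN} T)
    (E : LRState g → Stack g → Stack g → Prop) (w : List T) : Prop :=
  ∃ q : UState g, IsFinal g q.1 ∧ FPath g E (uStart g E) w q

/-- A stack `⟨s₁,X₁⟩…⟨s_k,X_k⟩` is a loop if `δ(s_k,X_k) = s₁`. -/
def IsLoop (g : ContextFreeGrammar.{uN} T) (τ : Stack g) : Prop :=
  ∃ p q : LRState g × Symbol T g.NT,
    τ.head? = some p ∧ τ.getLast? = some q ∧ next g q.1 q.2 = p.1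

/-- A loop is minimal if no proper prefix of it is a loop. -/
def IsMinimalLoop (g : ContextFreeGrammar.{uN} T) (τ : Stack g) : Prop :=
  IsLoop g τ ∧ ∀ τ' : Stack g, τ' <+: τ → τ' ≠ τ → ¬ IsLoop g τ'

/-- A stack is collapsible if it contains a loop as a contiguous segment. -/
def Collapsible (g : ContextFreeGrammar.{uN} T) (σ : Stack g) : Prop :=
  ∃ ρ τ υ : Stack g, σ = ρ ++ τ ++ υ ∧ IsLoop g τ

/-- `σ` immediately collapses to `σ'`: remove the earliest minimal loop. -/
def ImmediatelyCollapses (g : ContextFreeGrammar.{uN} T) (σ σ' : Stack g) : Prop :=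
  ∃ ρ τ υ : Stack g, σ = ρ ++ τ ++ υ ∧ σ' = ρ ++ υ ∧ IsMinimalLoop g τ ∧
    ¬ ∃ ρ' τ' υ' : Stack g, σ = ρ' ++ τ' ++ υ' ∧ ρ' <+: ρ ∧ ρ' ≠ ρ ∧ IsLoop g τ'

/-- `σ` collapses to `σ'` by finitely many immediate collapses. -/
def Collapses (g : ContextFreeGrammar.{uN} T) : Stack g → Stack g → Prop :=
  Relation.ReflTransGen (ImmediatelyCollapses g)

/-- Two stacks are collapsing-equivalent if they collapse to the same
uncollapsible stack. -/
def CollEquiv (g : ContextFreeGrammar.{uN} T) (σ σ' : Stack g) : Prop :=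
  ∃ τ : Stack g, ¬ Collapsible g τ ∧ Collapses g σ τ ∧ Collapses g σ' τ

/-- The collapsing congruence: the restriction of collapsing equivalence to
the sets `Stacks(s)`. -/
def CollCong (g : ContextFreeGrammar.{uN} T) (s : LRState g) (σ σ' : Stack g) : Prop :=
  Stacks g s σ ∧ Stacks g s σ' ∧ CollEquiv g σ σ'

/-- A CFG is left-linear if every rule has the form `A → Bβ` or `A → β`
with `β` a string of terminals. -/
def LeftLinear (g : ContextFreeGrammar.{uN} T) : Prop :=
  ∀ r ∈ g.rules, (∃ β : List T, r.output = β.map Symbol.terminal) ∨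
    (∃ (B : g.NT) (β : List T), r.output = Symbol.nonterminal B :: β.map Symbol.terminal)

/-- A CFG is right-linear if every rule has the form `A → βB` or `A → β`
with `β` a string of terminals. -/
def RightLinear (g : ContextFreeGrammar.{uN} T) : Prop :=
  ∀ r ∈ g.rules, (∃ β : List T, r.output = β.map Symbol.terminal) ∨
    (∃ (B : g.NT) (β : List T), r.output = β.map Symbol.terminal ++ [Symbol.nonterminal B])

/-- Reachable (genuine) states of `M(G)`. -/
def ReachableState (g : ContextFreeGrammar.{uN} T) (s : LRState g) : Prop :=
  s ≠ ∅ ∧ ∃ α : List (Symbol T g.NT), nextStar g (start g) α = s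

end LRApprox

open LRApprox

/-!
In a left-linear grammar the only nonterminal of a right-hand side stands in front, so the
closure step of `M(G)` only ever fires in `s₀`: the state reached from `s₀` by `α` is the set
`stateOf g α` of items `A → α · β` with `A → αβ` predicted in `s₀`. Consequently every item with
the dot at the left end lives in `s₀`, and every reduction of the unfolded recognizer pops back
to its start state `⟨s₀, [ε]⟩`, whatever the stack congruence. The flattening then loses nothing:
an accepting path of `F_≡` is a rightmost derivation read backwards, and a derivation
`S ⇒ A₁β₁ ⇒ A₂β₂β₁ ⇒ ⋯` is traced by shifting each `βᵢ` and reducing back to `s₀`.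
-/

namespace LRApprox

universe u v

section Grammar

variable {T : Type v} {N : Type u}

lemma nonterminal_not_mem_map_terminal (B : N) (w : List T) :
    Symbol.nonterminal B ∉ w.map (Symbol.terminal : T → Symbol T N) := by
  simp

lemma rewrites_nonterminal_cons_map_terminal {r : ContextFreeRule T N} {B : N} {w : List T}
    {x : List (Symbol T N)} (h : r.Rewrites (Symbol.nonterminal B :: w.map Symbol.terminal) x) :
    r.input = B ∧ x = r.output ++ w.map Symbol.terminal := by
  cases h with
  | head => exact ⟨rfl, rfl⟩
  | cons _ h => exact (nonterminal_not_mem_map_terminal _ _ h.nonterminal_input_mem).elim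

lemma not_produces_map_terminal {g : ContextFreeGrammar.{u} T} (w : List T)
    (x : List (Symbol T g.NT)) : ¬ g.Produces (w.map Symbol.terminal) x := by
  rintro ⟨r, -, h⟩
  exact nonterminal_not_mem_map_terminal _ _ h.nonterminal_input_mem

end Grammar

variable {T : Type v} {g : ContextFreeGrammar.{u} T}

section Machine

lemma mem_start_cases {d : DottedRule g} (h : d ∈ start g) :
    d = (none, [], [Symbol.nonterminal g.initial]) ∨
      ∃ r ∈ g.rules, d = (some r.input, [], r.output) := by
  induction (h : Closure g _ d) with
  | base hd => exact Or.inl hd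
  | step r _ hr hin => exact Or.inr ⟨r, hr, by rw [hin]⟩

lemma exists_rule_of_mem_start {A : g.NT} {γ : List (Symbol T g.NT)}
    (h : (some A, [], γ) ∈ start g) : ∃ r ∈ g.rules, r.input = A ∧ r.output = γ := by
  rcases mem_start_cases h with h | ⟨r, hr, h⟩
  · simp at h
  · simp only [Prod.mk.injEq, Option.some.injEq, true_and] at h
    exact ⟨r, hr, h.1.symm, h.2.symm⟩

lemma mem_start_of_nonterminal_cons {C : Option g.NT} {B : g.NT} {β : List (Symbol T g.NT)}
    (hB : (C, [], Symbol.nonterminal B :: β) ∈ start g) {r : ContextFreeRule T g.NT}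
    (hr : r ∈ g.rules) (hin : r.input = B) : (some B, [], r.output) ∈ start g :=
  Closure.step r hB hr hin

lemma LeftLinear.nonterminal_not_mem_tail (hg : LeftLinear g) {A : Option g.NT}
    {γ : List (Symbol T g.NT)} (h : (A, [], γ) ∈ start g) (C : g.NT) :
    Symbol.nonterminal C ∉ γ.tail := by
  rcases mem_start_cases h with h | ⟨r, hr, h⟩
  · simp only [Prod.mk.injEq] at h
    simp [h.2.2]
  · simp only [Prod.mk.injEq] at h
    rw [h.2.2]
    rcases hg r hr with ⟨w, hw⟩ | ⟨B, w, hw⟩ <;> rw [hw]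
    · rw [← List.map_tail]
      exact nonterminal_not_mem_map_terminal C _
    · exact nonterminal_not_mem_map_terminal C w

def stateOf (g : ContextFreeGrammar.{u} T) (α : List (Symbol T g.NT)) : LRState g :=
  {d | d.2.1 = α ∧ (d.1, [], α ++ d.2.2) ∈ start g}

lemma mem_stateOf {A : Option g.NT} {α α' β : List (Symbol T g.NT)} :
    (A, α', β) ∈ stateOf g α ↔ α' = α ∧ (A, [], α ++ β) ∈ start g :=
  Iff.rfl

lemma stateOf_nil : stateOf g [] = start g := by
  ext ⟨A, α, β⟩
  rw [mem_stateOf, List.nil_append]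
  constructor
  · rintro ⟨rfl, h⟩
    exact h
  · intro h
    rcases mem_start_cases h with h' | ⟨r, -, h'⟩ <;>
    · simp only [Prod.mk.injEq] at h'
      obtain ⟨rfl, rfl, rfl⟩ := h'
      exact ⟨rfl, h⟩

lemma mem_of_closure {R : Set (DottedRule g)}
    (hR : ∀ A α C β, (A, α, Symbol.nonterminal C :: β) ∉ R) {d : DottedRule g}
    (h : Closure g R d) : d ∈ R := by
  induction h with
  | base hd => exact hd
  | step _ _ _ _ ih => exact (hR _ _ _ _ ih).elim

lemma LeftLinear.next_stateOf (hg : LeftLinear g) (α : List (Symbol T g.NT))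
    (X : Symbol T g.NT) : next g (stateOf g α) X = stateOf g (α ++ [X]) := by
  ext d
  constructor
  · intro h
    refine (mem_of_closure ?_ h).elim ?_
    · rintro A α' C β ⟨A₀, α₀, β₀, hmem, hd⟩
      simp only [Prod.mk.injEq] at hd
      obtain ⟨rfl, rfl, rfl⟩ := hd
      obtain ⟨rfl, hst⟩ := mem_stateOf.1 hmem
      exact hg.nonterminal_not_mem_tail hst C (by cases α₀ <;> simp)
    · rintro A ⟨α', β, hmem, rfl⟩
      obtain ⟨rfl, hst⟩ := mem_stateOf.1 hmem
      exact ⟨rfl, by simpa using hst⟩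
  · rintro ⟨hd, hst⟩
    exact Closure.base ⟨d.1, α, d.2.2, ⟨rfl, by simpa using hst⟩, by rw [← hd]⟩

lemma nextStar_append_singleton (s : LRState g) (α : List (Symbol T g.NT))
    (X : Symbol T g.NT) : nextStar g s (α ++ [X]) = next g (nextStar g s α) X := by
  simp [nextStar]

lemma LeftLinear.nextStar_start (hg : LeftLinear g) (α : List (Symbol T g.NT)) :
    nextStar g (start g) α = stateOf g α := by
  induction α using List.reverseRecOn with
  | nil => exact stateOf_nil.symm
  | append_singleton α X ih => rw [nextStar_append_singleton, ih, hg.next_stateOf]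

lemma next_ne_empty_of_mem {s : LRState g} {A : Option g.NT} {α β : List (Symbol T g.NT)}
    {X : Symbol T g.NT} (h : (A, α, X :: β) ∈ s) : next g s X ≠ ∅ :=
  Set.nonempty_iff_ne_empty.1 ⟨_, Closure.base ⟨A, α, β, h, rfl⟩⟩

lemma Stacks.eq_nextStar {s : LRState g} {σ : Stack g} (h : Stacks g s σ) :
    s = nextStar g (start g) (σ.map Prod.snd) := by
  induction h with
  | nil => rfl
  | snoc _ _ ih => simp [nextStar_append_singleton, ← ih]

end Machine

section Unfolded

variable {E : LRState g → Stack g → Stack g → Prop}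

lemma uNextStar_fst (p : UState g) (α : List (Symbol T g.NT)) :
    (uNextStar g E p α).1 = nextStar g p.1 α := by
  induction α generalizing p with
  | nil => rfl
  | cons X α ih => exact ih (uNext g E p X)

lemma uNextStar_append_singleton (p : UState g) (α : List (Symbol T g.NT)) (X : Symbol T g.NT) :
    uNextStar g E p (α ++ [X]) = uNext g E (uNextStar g E p α) X := by
  simp [uNextStar]

lemma LeftLinear.uNextStar_uStart_fst (hg : LeftLinear g) (α : List (Symbol T g.NT)) :
    (uNextStar g E (uStart g E) α).1 = stateOf g α := by
  rw [uNextStar_fst]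
  exact hg.nextStar_start α

lemma LeftLinear.eq_uStart_of_mem (hg : LeftLinear g) {p : UState g} (hp : IsUState g E p)
    {A : Option g.NT} {γ : List (Symbol T g.NT)} (h : (A, [], γ) ∈ p.1) : p = uStart g E := by
  obtain ⟨σ, hσ, hclass⟩ := hp
  have hstate : p.1 = stateOf g (σ.map Prod.snd) := hσ.eq_nextStar.trans (hg.nextStar_start _)
  rw [hstate, mem_stateOf] at h
  obtain rfl : σ = [] := List.map_eq_nil_iff.1 h.1.symm
  rw [List.map_nil, stateOf_nil] at hstate
  exact Prod.ext hstate (by rw [hclass, hstate]; rfl)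

lemma LeftLinear.mem_popSet_iff (hg : LeftLinear g) {α : List (Symbol T g.NT)} {p' : UState g} :
    p' ∈ PopSet g E (uNextStar g E (uStart g E) α) ↔
      ∃ A : g.NT, (some A, [], α) ∈ start g ∧ next g (start g) (Symbol.nonterminal A) ≠ ∅ ∧
        p' = uNextStar g E (uStart g E) [Symbol.nonterminal A] := by
  constructor
  · rintro ⟨A, α', p'', hp'', hred, hpred, -, hne, rfl⟩
    rw [hg.uNextStar_uStart_fst, mem_stateOf] at hred
    obtain rfl := hred.1
    obtain rfl := hg.eq_uStart_of_mem hp'' hpred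
    exact ⟨A, hpred, hne, rfl⟩
  · rintro ⟨A, hA, hne, rfl⟩
    refine ⟨A, α, uStart g E, ⟨[], Stacks.nil, rfl⟩, ?_, hA, rfl, hne, rfl⟩
    rw [hg.uNextStar_uStart_fst, mem_stateOf]
    exact ⟨rfl, by simpa using hA⟩

lemma LeftLinear.derives_of_fPath (hg : LeftLinear g) {p q : UState g} {w : List T}
    (h : FPath g E p w q) (hq : IsFinal g q.1) (α : List (Symbol T g.NT))
    (hp : p = uNextStar g E (uStart g E) α) :
    g.Derives [Symbol.nonterminal g.initial] (α ++ w.map Symbol.terminal) := by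
  induction h generalizing α with
  | refl =>
    subst hp
    rw [IsFinal, hg.uNextStar_uStart_fst] at hq
    obtain ⟨rfl, -⟩ := hq
    simpa [finalDR] using Relation.ReflTransGen.refl
  | @shift p x w q _ _ ih =>
    subst hp
    simpa using ih hq (α ++ [Symbol.terminal x]) (uNextStar_append_singleton _ _ _).symm
  | eps hpop _ ih =>
    subst hp
    obtain ⟨A, hA, -, rfl⟩ := hg.mem_popSet_iff.1 hpop
    obtain ⟨r, hr, rfl, rfl⟩ := exists_rule_of_mem_start hA
    exact (ih hq _ rfl).tail ⟨r, hr, ContextFreeRule.Rewrites.head _⟩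

lemma LeftLinear.mem_language_of_fAccepts (hg : LeftLinear g) {w : List T}
    (h : FAccepts g E w) : w ∈ g.language := by
  obtain ⟨q, hq, hpath⟩ := h
  show g.Derives _ _
  simpa using hg.derives_of_fPath hpath hq [] rfl

lemma LeftLinear.fPath_shift_terminals (hg : LeftLinear g) {A : Option g.NT}
    {β : List (Symbol T g.NT)} {w : List T} {q : UState g} (t : List T) :
    ∀ γ : List (Symbol T g.NT), (A, [], γ ++ t.map Symbol.terminal ++ β) ∈ start g →
      FPath g E (uNextStar g E (uStart g E) (γ ++ t.map Symbol.terminal)) w q →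
      FPath g E (uNextStar g E (uStart g E) γ) (t ++ w) q := by
  induction t with
  | nil => simp
  | cons x t ih =>
    intro γ hst hpath
    have hmem : (A, γ, Symbol.terminal x :: (t.map Symbol.terminal ++ β)) ∈
        (uNextStar g E (uStart g E) γ).1 := by
      rw [hg.uNextStar_uStart_fst, mem_stateOf]
      exact ⟨rfl, by simpa using hst⟩
    refine FPath.shift (next_ne_empty_of_mem hmem) ?_
    rw [← uNextStar_append_singleton]
    exact ih _ (by simpa using hst) (by simpa using hpath)

def FAcceptsFrom (g : ContextFreeGrammar.{u} T) (E : LRState g → Stack g → Stack g → Prop)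
    (p : UState g) (w : List T) : Prop :=
  ∃ q : UState g, IsFinal g q.1 ∧ FPath g E p w q

lemma LeftLinear.fAcceptsFrom_of_rule (hg : LeftLinear g) {C : Option g.NT} {B : g.NT}
    {β : List (Symbol T g.NT)} (hB : (C, [], Symbol.nonterminal B :: β) ∈ start g)
    {r : ContextFreeRule T g.NT} (hr : r ∈ g.rules) (hin : r.input = B)
    {γ : List (Symbol T g.NT)} {t u : List T} (hout : r.output = γ ++ t.map Symbol.terminal)
    (h : FAcceptsFrom g E (uNextStar g E (uStart g E) [Symbol.nonterminal B]) u) :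
    FAcceptsFrom g E (uNextStar g E (uStart g E) γ) (t ++ u) := by
  have hrule : (some B, [], γ ++ t.map Symbol.terminal) ∈ start g :=
    hout ▸ mem_start_of_nonterminal_cons hB hr hin
  obtain ⟨q, hq, hpath⟩ := h
  refine ⟨q, hq, hg.fPath_shift_terminals (β := []) t γ (by simpa using hrule) (FPath.eps ?_ hpath)⟩
  exact hg.mem_popSet_iff.2 ⟨B, hrule, next_ne_empty_of_mem hB, rfl⟩

lemma LeftLinear.exists_fAcceptsFrom_of_derives (hg : LeftLinear g) {x : List (Symbol T g.NT)}
    (h : g.Derives [Symbol.nonterminal g.initial] x) :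
    ∃ (γ : List (Symbol T g.NT)) (u : List T), x = γ ++ u.map Symbol.terminal ∧
      FAcceptsFrom g E (uNextStar g E (uStart g E) γ) u ∧
      (γ = [] ∨ ∃ (B : g.NT) (C : Option g.NT) (β : List (Symbol T g.NT)),
        γ = [Symbol.nonterminal B] ∧ (C, [], Symbol.nonterminal B :: β) ∈ start g) := by
  induction h with
  | refl =>
    refine ⟨[Symbol.nonterminal g.initial], [], rfl, ⟨_, ?_, FPath.refl _⟩,
      Or.inr ⟨g.initial, none, [], rfl, Closure.base rfl⟩⟩
    rw [IsFinal, hg.uNextStar_uStart_fst, finalDR, mem_stateOf]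
    exact ⟨rfl, Closure.base rfl⟩
  | tail _ hstep ih =>
    obtain ⟨γ, u, rfl, hacc, rfl | ⟨B, C, β, rfl, hB⟩⟩ := ih
    · exact (not_produces_map_terminal u _ (by simpa using hstep)).elim
    obtain ⟨r, hr, hrw⟩ := hstep
    obtain ⟨hin, rfl⟩ := rewrites_nonterminal_cons_map_terminal hrw
    rcases hg r hr with ⟨t, ht⟩ | ⟨C', t, ht⟩
    · exact ⟨[], t ++ u, by simp [ht], hg.fAcceptsFrom_of_rule hB hr hin (by simpa using ht) hacc,
        Or.inl rfl⟩
    · exact ⟨[Symbol.nonterminal C'], t ++ u, by simp [ht],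
        hg.fAcceptsFrom_of_rule hB hr hin (by simpa using ht) hacc,
        Or.inr ⟨C', some B, _, rfl, ht ▸ mem_start_of_nonterminal_cons hB hr hin⟩⟩

lemma LeftLinear.fAccepts_of_mem_language (hg : LeftLinear g) {w : List T}
    (h : w ∈ g.language) : FAccepts g E w := by
  obtain ⟨γ, u, hw, hacc, rfl | ⟨B, -, -, rfl, -⟩⟩ := hg.exists_fAcceptsFrom_of_derives (E := E) h
  · obtain rfl : w = u := List.map_injective_iff.2 (fun _ _ => Symbol.terminal.inj) hw
    exact hacc
  · cases w <;> simp at hw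

end Unfolded

end LRApprox

/-- For a left-linear CFG `G`, the FSA `F` derived from `G`
by the basic approximation algorithm (the flattening of the recognizer
unfolded by the collapsing stack congruence) satisfies `L(G) = L(F)`. -/
theorem left_linear_exact {T : Type*} (g : LRApprox.ContextFreeGrammar T)
    (hg : LeftLinear g) :
    ∀ w : List T, w ∈ g.language ↔ FAccepts g (CollCong g) w :=
  fun _ => ⟨hg.fAccepts_of_mem_language, hg.mem_language_of_fAccepts⟩
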